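/- Let q be a prime power, n a prime number, t a positive integer, N = nt, and m a positive integer dividing q^n − 1. Let 1 ≤ s < k with gcd(s, N) = 1, let a_0, a_s be nonzero elements of the subfield 𝔽_{q^n} of 𝔽_{q^N}, and let V be a k-dimensional 𝔽_q-subspace of 𝔽_{q^N} whose subspace polynomial is L_V(X) = X^{q^k} + a_s X^{q^s} + a_0 X. Assume that a_0^{q^k − q^s} · (a_s^{q^k − 1})^{−1} does not lie in the subfield 𝔽_q of 𝔽_{q^N}. Then the code C := ∪_{i=0}^{n−1} {α^m σ_i(V) : α ∈ 𝔽_{q^N}^*} satisfies m·(q − 1)·|C| ≥ n·(q^N − 1), i.e., C contains at least (n/m)·(q^N − 1)/(q − 1) distinct subspaces. -/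

import Mathlib

open Polynomial

/-!
Elements of `A σᵢ(V)` are roots of the trinomial
`X^{q^k} + A^{q^k-q^s} a_s^{q^i} X^{q^s} + A^{q^k-1} a_0^{q^i} X`, and two such trinomials
vanishing on the same `q^k > q^s` points have equal coefficients. So if `A σᵢ(V) = B σⱼ(V)`, then
with `δ = A / B` the invariant `z = a_0^{q^k-q^s} / a_s^{q^k-1}` satisfies `z^{q^i} = z^{q^j}`.
Since `z ∈ 𝔽_{q^n} \ 𝔽_q` and `n` is prime, the Frobenius orbit of `z` has length `n`, whence
`i = j`; then `δ^{q^s} = δ = δ^{q^N}` and `gcd(s, N) = 1` force `δ ∈ 𝔽_q^*`. Hence a code word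
`β^m σⱼ(V)` comes from at most `m (q - 1)` of the `n (q^N - 1)` pairs `(i, α)`: those with
`i = j` and `α^m ∈ 𝔽_q^* β^m`.
-/

/-- The `m`-quasi cyclic shift of a subspace `V` by `a`: `a • V = {a * v : v ∈ V}`. -/
noncomputable def qshift {K F : Type*} [Field K] [Field F] [Algebra K F]
    (a : F) (V : Submodule K F) : Submodule K F :=
  V.map (LinearMap.mulLeft K a)

/-- The subspace polynomial `L_V(X) = ∏_{v ∈ V} (X - v)` of a subspace `V` of a
finite field. -/
noncomputable def subspacePoly {K F : Type*} [Field K] [Field F] [Algebra K F] [Fintype F]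
    (V : Submodule K F) : F[X] :=
  ∏ v ∈ (Set.toFinite (V : Set F)).toFinset, (X - C v)

/-- The subspace distance `d(U,V) = dim U + dim V - 2 dim (U ⊓ V)`. -/
noncomputable def subspaceDist {K F : Type*} [Field K] [Field F] [Algebra K F]
    (U V : Submodule K F) : ℕ :=
  Module.finrank K U + Module.finrank K V - 2 * Module.finrank K ↥(U ⊓ V)

open Function Finset

lemma mul_pow_add_mul_pow_add_mul {R : Type*} [CommRing R] {Q S : ℕ} (hSQ : S ≤ Q) (hQ : 1 ≤ Q)
    (A y b c : R) :
    (A * y) ^ Q + A ^ (Q - S) * b * (A * y) ^ S + A ^ (Q - 1) * c * (A * y) =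
      A ^ Q * (y ^ Q + b * y ^ S + c * y) := by
  have h1 := pow_sub_mul_pow A hSQ
  have h2 := pow_sub_mul_pow A hQ
  rw [pow_one] at h2
  linear_combination (b * y ^ S) * h1 + (c * y) * h2

lemma pow_eq_self_of_pow_sub_eq_one {M : Type*} [Monoid M] {δ : M} {Q S : ℕ} (hSQ : S ≤ Q)
    (hQ : 1 ≤ Q) (h1 : δ ^ (Q - S) = 1) (h2 : δ ^ (Q - 1) = 1) : δ ^ S = δ :=
  calc δ ^ S = δ ^ (Q - S) * δ ^ S := by rw [h1, one_mul]
    _ = δ ^ (Q - 1) * δ ^ 1 := by rw [pow_sub_mul_pow δ hSQ, pow_sub_mul_pow δ hQ]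
    _ = δ := by rw [h2, one_mul, pow_one]

lemma pow_mul_inv_pow_eq_of_eq_pow_mul {F : Type*} [Field F] {δ a a' b b' : F} (hδ : δ ≠ 0)
    (e₁ e₂ : ℕ) (ha : a' = δ ^ e₂ * a) (hb : b' = δ ^ e₁ * b) :
    a' ^ e₁ * (b' ^ e₂)⁻¹ = a ^ e₁ * (b ^ e₂)⁻¹ := by
  subst ha hb
  rw [mul_pow, mul_pow, ← pow_mul, ← pow_mul, mul_comm e₂ e₁, mul_inv, mul_mul_mul_comm,
    mul_inv_cancel₀ (pow_ne_zero _ hδ), one_mul]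

lemma eq_and_eq_of_forall_mul_pow_add_mul_eq {R ι : Type*} [CommRing R] [IsDomain R] [Fintype ι]
    {f : ι → R} (hf : Injective f) {e : ℕ} (he : 1 < e) (hcard : e < Fintype.card ι)
    {b c b' c' : R} (h : ∀ i, b * f i ^ e + c * f i = b' * f i ^ e + c' * f i) :
    b = b' ∧ c = c' := by
  have hzero : C (b - b') * X ^ e + C (c - c') * X = 0 := by
    refine eq_zero_of_natDegree_lt_card_of_eval_eq_zero _ hf (fun i => ?_)
      (lt_of_le_of_lt ?_ hcard)
    · simp only [eval_add, eval_mul, eval_C, eval_pow, eval_X]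
      linear_combination h i
    · compute_degree
      omega
  have hb := congrArg (coeff · e) hzero
  have hc := congrArg (coeff · 1) hzero
  simp only [coeff_add, coeff_C_mul, coeff_X_pow, coeff_X, coeff_zero, if_pos, if_neg he.ne,
    mul_one, mul_zero, add_zero, zero_add] at hb hc
  exact ⟨sub_eq_zero.mp hb, sub_eq_zero.mp hc⟩

lemma card_filter_pow_mem_le {F : Type*} [Field F] [Fintype F] [DecidableEq F] {m : ℕ}
    (hm : 0 < m) (S : Finset F) : #{x : F | x ^ m ∈ S} ≤ m * #S := by
  calc #{x : F | x ^ m ∈ S} ≤ #(S.biUnion fun a => nthRootsFinset m a) :=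
        card_le_card fun x hx => mem_biUnion.mpr
          ⟨x ^ m, (mem_filter.mp hx).2, (mem_nthRootsFinset hm _).mpr rfl⟩
    _ ≤ #S * m := card_biUnion_le_card_mul _ _ _ fun a _ => by
        rw [nthRootsFinset_def]
        exact (Multiset.toFinset_card_le _).trans (card_nthRoots m a)
    _ = m * #S := mul_comm _ _

lemma isPeriodicPt_pow_iff {M : Type*} [Monoid M] {q a : ℕ} {x : M} :
    IsPeriodicPt (· ^ q) a x ↔ x ^ q ^ a = x := by
  simp only [IsPeriodicPt, IsFixedPt, pow_iterate]

namespace FiniteField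

variable {K F : Type*} [Field K] [Fintype K] [Field F] [Algebra K F]

lemma frobeniusAlgHom_pow_apply (i : ℕ) (x : F) :
    (frobeniusAlgHom K F ^ i) x = x ^ Fintype.card K ^ i := by
  rw [AlgHom.coe_pow, coe_frobeniusAlgHom, pow_iterate]

lemma mem_range_algebraMap_of_pow_card_eq {x : F} (hx : x ^ Fintype.card K = x) :
    x ∈ Set.range (algebraMap K F) := by
  have hq := Fintype.one_lt_card (α := K)
  have hmonic : (X ^ Fintype.card K - X : K[X]).Monic := monic_X_pow_sub (by simpa using hq)
  have hroots := hmonic.roots_map_of_card_eq_natDegree (algebraMap K F) (by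
    rw [roots_X_pow_card_sub_X, X_pow_card_sub_X_natDegree_eq K hq]; rfl)
  have hx' : x ∈ ((X ^ Fintype.card K - X : K[X]).map (algebraMap K F)).roots := by
    rw [mem_roots (hmonic.map _).ne_zero]
    simp [hx]
  rw [← hroots, roots_X_pow_card_sub_X] at hx'
  obtain ⟨c, -, rfl⟩ := Multiset.mem_map.mp hx'
  exact ⟨c, rfl⟩

lemma mem_range_algebraMap_of_pow_pow_eq {x : F} {a b : ℕ} (hab : a.Coprime b)
    (ha : x ^ Fintype.card K ^ a = x) (hb : x ^ Fintype.card K ^ b = x) :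
    x ∈ Set.range (algebraMap K F) := by
  have h := (isPeriodicPt_pow_iff.mpr ha).gcd (isPeriodicPt_pow_iff.mpr hb)
  rw [hab.gcd_eq_one, isPeriodicPt_pow_iff, pow_one] at h
  exact mem_range_algebraMap_of_pow_card_eq h

/-- An element outside `K` fixed by the `n`-th power of the Frobenius, `n` prime, has
Frobenius orbit of length exactly `n`. -/
lemma eq_of_pow_pow_eq_pow_pow {z : F} {n i j : ℕ} (hn : n.Prime)
    (hzn : z ^ Fintype.card K ^ n = z) (hz : z ∉ Set.range (algebraMap K F))
    (hi : i < n) (hj : j < n) (hij : z ^ Fintype.card K ^ i = z ^ Fintype.card K ^ j) : i = j := by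
  have hperiod : minimalPeriod (· ^ Fintype.card K) z = n := by
    rcases hn.eq_one_or_self_of_dvd _ (isPeriodicPt_pow_iff.mpr hzn).minimalPeriod_dvd with h | h
    · rw [minimalPeriod_eq_one_iff_isFixedPt] at h
      exact absurd (mem_range_algebraMap_of_pow_card_eq h) hz
    · exact h
  refine iterate_injOn_Iio_minimalPeriod (f := (· ^ Fintype.card K)) (hperiod ▸ hi)
    (hperiod ▸ hj) ?_
  simpa only [pow_iterate] using hij

end FiniteField

lemma eval_subspacePoly_of_mem {K F : Type*} [Field K] [Field F] [Algebra K F] [Fintype F]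
    {V : Submodule K F} {v : F} (hv : v ∈ V) :
    (subspacePoly V).eval v = 0 := by
  rw [subspacePoly, eval_prod]
  exact prod_eq_zero (i := v) (by simpa using hv) (by simp)

lemma coe_qshift_map_frobeniusAlgHom_pow {K F : Type*} [Field K] [Fintype K] [Field F]
    [Algebra K F] (A : F) (i : ℕ) (V : Submodule K F) :
    (qshift A (V.map (FiniteField.frobeniusAlgHom K F ^ i).toLinearMap) : Set F) =
      (fun v => A * v ^ Fintype.card K ^ i) '' V := by
  simp only [qshift, Submodule.map_coe, Set.image_image, LinearMap.mulLeft_apply,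
    AlgHom.toLinearMap_apply, FiniteField.frobeniusAlgHom_pow_apply]

section TrinomialSubspace

open FiniteField

variable {K F : Type*} [Field K] [Fintype K] [Field F] [Fintype F] [Algebra K F]
  {q k s : ℕ} {a₀ aₛ : F} {V : Submodule K F}

/-- `σⁱ` transports the relation of `V`, and scaling by `A` rescales its coefficients. -/
lemma trinomial_mul_frobenius_eq_zero (hq : Fintype.card K = q) (hsk : s ≤ k)
    (hLV : subspacePoly V = X ^ q ^ k + C aₛ * X ^ q ^ s + C a₀ * X) {v : F} (hv : v ∈ V)
    (A : F) (i : ℕ) :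
    (A * v ^ q ^ i) ^ q ^ k + A ^ (q ^ k - q ^ s) * aₛ ^ q ^ i * (A * v ^ q ^ i) ^ q ^ s +
      A ^ (q ^ k - 1) * a₀ ^ q ^ i * (A * v ^ q ^ i) = 0 := by
  have hq0 : 0 < q := hq ▸ Fintype.card_pos
  have hroot : v ^ q ^ k + aₛ * v ^ q ^ s + a₀ * v = 0 := by
    simpa [hLV] using eval_subspacePoly_of_mem hv
  have hfrob := congrArg (frobeniusAlgHom K F ^ i) hroot
  simp only [map_add, map_mul, map_pow, map_zero, frobeniusAlgHom_pow_apply, hq] at hfrob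
  rw [mul_pow_add_mul_pow_add_mul (Nat.pow_le_pow_right hq0 hsk) (Nat.one_le_pow _ _ hq0),
    hfrob, mul_zero]

lemma coeffs_eq_of_qshift_eq (hq : Fintype.card K = q) (hs : 1 ≤ s) (hsk : s < k)
    (hVk : Module.finrank K V = k)
    (hLV : subspacePoly V = X ^ q ^ k + C aₛ * X ^ q ^ s + C a₀ * X) {A B : F} (hA : A ≠ 0)
    {i j : ℕ}
    (h : qshift A (V.map (frobeniusAlgHom K F ^ i).toLinearMap) =
      qshift B (V.map (frobeniusAlgHom K F ^ j).toLinearMap)) :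
    A ^ (q ^ k - q ^ s) * aₛ ^ q ^ i = B ^ (q ^ k - q ^ s) * aₛ ^ q ^ j ∧
      A ^ (q ^ k - 1) * a₀ ^ q ^ i = B ^ (q ^ k - 1) * a₀ ^ q ^ j := by
  classical
  have hq1 : 1 < q := hq ▸ Fintype.one_lt_card
  have hinj : Injective fun v : V => A * (v : F) ^ q ^ i := by
    intro v w hvw
    have hfrob : (frobeniusAlgHom K F ^ i) v = (frobeniusAlgHom K F ^ i) w := by
      simpa only [frobeniusAlgHom_pow_apply, hq] using mul_left_cancel₀ hA hvw
    exact Subtype.ext ((frobeniusAlgHom K F ^ i).toRingHom.injective hfrob)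
  refine eq_and_eq_of_forall_mul_pow_add_mul_eq hinj (e := q ^ s)
    (Nat.one_lt_pow (by omega) hq1) ?_ ?_
  · rw [← hq, Module.card_eq_pow_finrank (K := K) (V := V), hVk, hq]
    exact Nat.pow_lt_pow_right hq1 hsk
  · rintro ⟨v, hv⟩
    have hmem : A * v ^ q ^ i ∈
        (qshift B (V.map (frobeniusAlgHom K F ^ j).toLinearMap) : Set F) := by
      rw [← h, coe_qshift_map_frobeniusAlgHom_pow, hq]
      exact Set.mem_image_of_mem _ hv
    rw [coe_qshift_map_frobeniusAlgHom_pow, hq] at hmem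
    obtain ⟨w, hw, hwv⟩ := hmem
    have hA' := trinomial_mul_frobenius_eq_zero hq hsk.le hLV hv A i
    have hB' := trinomial_mul_frobenius_eq_zero hq hsk.le hLV hw B j
    rw [show B * w ^ q ^ j = A * v ^ q ^ i from hwv] at hB'
    linear_combination hA' - hB'

lemma eq_and_exists_eq_algebraMap_mul_of_qshift_eq (hq : Fintype.card K = q) {n N : ℕ}
    (hnp : n.Prime) (hF : Module.finrank K F = N) (hs : 1 ≤ s) (hsk : s < k)
    (hsN : Nat.gcd s N = 1) (ha₀ : a₀ ≠ 0) (haₛ : aₛ ≠ 0) (ha₀n : a₀ ^ q ^ n = a₀)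
    (haₛn : aₛ ^ q ^ n = aₛ) (hVk : Module.finrank K V = k)
    (hLV : subspacePoly V = X ^ q ^ k + C aₛ * X ^ q ^ s + C a₀ * X)
    (hz : a₀ ^ (q ^ k - q ^ s) * (aₛ ^ (q ^ k - 1))⁻¹ ∉ Set.range (algebraMap K F))
    {A B : F} (hA : A ≠ 0) (hB : B ≠ 0) {i j : ℕ} (hi : i < n) (hj : j < n)
    (h : qshift A (V.map (frobeniusAlgHom K F ^ i).toLinearMap) =
      qshift B (V.map (frobeniusAlgHom K F ^ j).toLinearMap)) :
    i = j ∧ ∃ c : K, A = algebraMap K F c * B := by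
  have hq0 : 0 < q := hq ▸ Fintype.card_pos
  obtain ⟨h₁, h₂⟩ := coeffs_eq_of_qshift_eq hq hs hsk hVk hLV hA h
  set e₁ := q ^ k - q ^ s
  set e₂ := q ^ k - 1
  set δ := A / B
  have hAB : A = δ * B := (div_mul_cancel₀ A hB).symm
  have hδ : δ ≠ 0 := div_ne_zero hA hB
  rw [hAB, mul_pow] at h₁ h₂
  have haₛ' : aₛ ^ q ^ j = δ ^ e₁ * aₛ ^ q ^ i :=
    mul_left_cancel₀ (pow_ne_zero e₁ hB) (by linear_combination -h₁)
  have ha₀' : a₀ ^ q ^ j = δ ^ e₂ * a₀ ^ q ^ i :=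
    mul_left_cancel₀ (pow_ne_zero e₂ hB) (by linear_combination -h₂)
  set z := a₀ ^ e₁ * (aₛ ^ e₂)⁻¹
  have hz_pow (l : ℕ) : z ^ q ^ l = (a₀ ^ q ^ l) ^ e₁ * ((aₛ ^ q ^ l) ^ e₂)⁻¹ := by
    rw [mul_pow, inv_pow, pow_right_comm a₀, pow_right_comm aₛ]
  have hij : i = j := by
    refine eq_of_pow_pow_eq_pow_pow hnp (by rw [hq, hz_pow, ha₀n, haₛn]) hz hi hj ?_
    rw [hq, hz_pow, hz_pow]
    exact (pow_mul_inv_pow_eq_of_eq_pow_mul hδ e₁ e₂ ha₀' haₛ').symm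
  subst hij
  have hδ₁ : δ ^ e₁ = 1 := (mul_eq_right₀ (pow_ne_zero _ haₛ)).mp haₛ'.symm
  have hδ₂ : δ ^ e₂ = 1 := (mul_eq_right₀ (pow_ne_zero _ ha₀)).mp ha₀'.symm
  have hδs : δ ^ q ^ s = δ := pow_eq_self_of_pow_sub_eq_one
    (Nat.pow_le_pow_right hq0 hsk.le) (Nat.one_le_pow _ _ hq0) hδ₁ hδ₂
  have hδN : δ ^ q ^ N = δ := by
    rw [← hq, ← hF, ← Module.card_eq_pow_finrank]
    exact pow_card δ
  obtain ⟨c, hc⟩ := mem_range_algebraMap_of_pow_pow_eq hsN (hq ▸ hδs) (hq ▸ hδN)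
  exact ⟨rfl, c, by rw [hAB, hc]⟩

end TrinomialSubspace

section Code

open FiniteField

variable {K F : Type*} [Field K] [Fintype K] [Field F] [Fintype F] [Algebra K F]

/-- `α ^ m σᵢ(V)`, indexed by `(i, α)`. -/
noncomputable def quasiFrobeniusShift {n : ℕ} (m : ℕ) (V : Submodule K F) (p : Fin n × Fˣ) :
    Submodule K F :=
  qshift ((p.2 : F) ^ m) (V.map (frobeniusAlgHom K F ^ (p.1 : ℕ)).toLinearMap)

open Classical in
lemma card_fiber_quasiFrobeniusShift_le {q n N m k s : ℕ} (hq : Fintype.card K = q)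
    (hnp : n.Prime) (hF : Module.finrank K F = N) (hm : 0 < m) (hs : 1 ≤ s) (hsk : s < k)
    (hsN : Nat.gcd s N = 1) {a₀ aₛ : F} (ha₀ : a₀ ≠ 0) (haₛ : aₛ ≠ 0) (ha₀n : a₀ ^ q ^ n = a₀)
    (haₛn : aₛ ^ q ^ n = aₛ) {V : Submodule K F} (hVk : Module.finrank K V = k)
    (hLV : subspacePoly V = X ^ q ^ k + C aₛ * X ^ q ^ s + C a₀ * X)
    (hz : a₀ ^ (q ^ k - q ^ s) * (aₛ ^ (q ^ k - 1))⁻¹ ∉ Set.range (algebraMap K F))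
    (p₀ : Fin n × Fˣ) :
    #{p : Fin n × Fˣ | quasiFrobeniusShift m V p = quasiFrobeniusShift m V p₀} ≤ m * (q - 1) := by
  obtain ⟨j, u⟩ := p₀
  set S := (univ : Finset Kˣ).image fun c : Kˣ => algebraMap K F c * (u : F) ^ m
  have hfiber : ∀ p ∈ ({p | quasiFrobeniusShift m V p = quasiFrobeniusShift m V (j, u)} :
      Finset (Fin n × Fˣ)), p.1 = j ∧ (p.2 : F) ^ m ∈ S := by
    intro p hp
    obtain ⟨hij, c, hc⟩ := eq_and_exists_eq_algebraMap_mul_of_qshift_eq hq hnp hF hs hsk hsN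
      ha₀ haₛ ha₀n haₛn hVk hLV hz (pow_ne_zero m p.2.ne_zero) (pow_ne_zero m u.ne_zero)
      p.1.isLt j.isLt (mem_filter.mp hp).2
    have hc0 : c ≠ 0 := by
      rintro rfl
      simp at hc
    exact ⟨Fin.ext hij, mem_image.mpr ⟨Units.mk0 c hc0, mem_univ _, hc.symm⟩⟩
  calc #{p | quasiFrobeniusShift m V p = quasiFrobeniusShift m V (j, u)}
      ≤ #{x : F | x ^ m ∈ S} := card_le_card_of_injOn (fun p => (p.2 : F))
        (fun p hp => mem_filter.mpr ⟨mem_univ _, (hfiber p hp).2⟩)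
        (fun p hp p' hp' h => Prod.ext ((hfiber p hp).1.trans (hfiber p' hp').1.symm)
          (Units.ext h))
    _ ≤ m * #S := card_filter_pow_mem_le hm S
    _ ≤ m * (q - 1) := by
      gcongr
      exact card_image_le.trans (by rw [card_univ, Fintype.card_units, hq])

end Code

theorem frobenius_quasi_orbit_code_size_general
    {K F : Type*} [Field K] [Fintype K] [Field F] [Fintype F] [Algebra K F]
    (q n N m k s : ℕ) (hq : Fintype.card K = q)
    (hnp : n.Prime)
    (hF : Module.finrank K F = N) (hm : 0 < m)
    (hs1 : 1 ≤ s) (hsk : s < k) (hsN : Nat.gcd s N = 1)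
    (a0 as : F) (ha0 : a0 ≠ 0) (has : as ≠ 0)
    (ha0sub : a0 ^ q ^ n = a0) (hassub : as ^ q ^ n = as)
    (V : Submodule K F) (hVk : Module.finrank K ↥V = k)
    (hLV : subspacePoly V = X ^ q ^ k + C as * X ^ q ^ s + C a0 * X)
    (hz : a0 ^ (q ^ k - q ^ s) * (as ^ (q ^ k - 1))⁻¹ ∉ Set.range (algebraMap K F)) :
    n * (q ^ N - 1) ≤
      m * (q - 1) *
        Set.ncard {W : Submodule K F | ∃ i < n, ∃ α : F, α ≠ 0 ∧
          (W : Set F) = (fun v => α ^ m * v ^ q ^ i) '' (V : Set F)} := by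
  classical
  have hcode : {W : Submodule K F | ∃ i < n, ∃ α : F, α ≠ 0 ∧
      (W : Set F) = (fun v => α ^ m * v ^ q ^ i) '' (V : Set F)} =
      Set.range (quasiFrobeniusShift (n := n) m V) := by
    ext W
    simp only [Set.mem_ofPred_eq, Set.mem_range, Prod.exists, quasiFrobeniusShift,
      ← SetLike.coe_set_eq, coe_qshift_map_frobeniusAlgHom_pow, hq]
    exact ⟨fun ⟨i, hi, α, hα, hW⟩ => ⟨⟨i, hi⟩, Units.mk0 α hα, hW.symm⟩,
      fun ⟨i, α, hW⟩ => ⟨i, i.isLt, α, α.ne_zero, hW.symm⟩⟩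
  have hcard : #(univ : Finset (Fin n × Fˣ)) = n * (q ^ N - 1) := by
    rw [card_univ, Fintype.card_prod, Fintype.card_fin, Fintype.card_units, ← hq, ← hF,
      ← Module.card_eq_pow_finrank]
  rw [hcode, ← Set.image_univ, ← coe_univ, ← coe_image, Set.ncard_coe_finset, ← hcard]
  refine card_le_mul_card_image _ _ fun W hW => ?_
  obtain ⟨p₀, -, rfl⟩ := mem_image.mp hW
  exact card_fiber_quasiFrobeniusShift_le hq hnp hF hm hs1 hsk hsN ha0 has ha0sub hassub hVk hLV
    hz p₀

theorem frobenius_quasi_orbit_code_size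
    {K F : Type*} [Field K] [Fintype K] [Field F] [Fintype F] [Algebra K F]
    (q n t N m k s : ℕ) (hq : Fintype.card K = q)
    (hnp : n.Prime) (ht : 0 < t) (hN : N = n * t)
    (hF : Module.finrank K F = N) (hm : 0 < m) (hmdvd : m ∣ q ^ n - 1)
    (hs1 : 1 ≤ s) (hsk : s < k) (hsN : Nat.gcd s N = 1)
    (a0 as : F) (ha0 : a0 ≠ 0) (has : as ≠ 0)
    (ha0sub : a0 ^ q ^ n = a0) (hassub : as ^ q ^ n = as)
    (V : Submodule K F) (hVk : Module.finrank K ↥V = k)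
    (hLV : subspacePoly V = X ^ q ^ k + C as * X ^ q ^ s + C a0 * X)
    (hz : a0 ^ (q ^ k - q ^ s) * (as ^ (q ^ k - 1))⁻¹ ∉ Set.range (algebraMap K F)) :
    n * (q ^ N - 1) ≤
      m * (q - 1) *
        Set.ncard {W : Submodule K F | ∃ i < n, ∃ α : F, α ≠ 0 ∧
          (W : Set F) = (fun v => α ^ m * v ^ q ^ i) '' (V : Set F)} :=
  frobenius_quasi_orbit_code_size_general q n N m k s hq hnp hF hm hs1 hsk hsN a0 as ha0 has ha0sub
    hassub V hVk hLV hz
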